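/- Fix A ≥ 2 and ε ∈ [0,1). Consider the Markov chain on states {0, 1, ..., A-1} ∪ {done} where from state n ≥ 1: with probability ε/(A-1) move to 'done'; with probability 1-ε+(n-1)·ε/(A-1) move to n-1; with probability (A-n-1)·ε/(A-1) stay at n. Define the expected hitting time of 'done' from n, counting one unit per transition, with the convention that reaching state 0 means done (hitting time 0 from state 0). Then for every n ∈ {0, 1, ..., A-1} the expected hitting time from state n equals n/(1 - ((A-1-n)/(A-1))·ε) ≤ A-1. -/
import Mathlib


/-- Expected hitting time of `done` for the teaching Markov chain on
`{0,…,A-1}`: from state `n ≥ 1`, with probability `ε/(A-1)` go to `done`,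
with probability `1-ε+(n-1)ε/(A-1)` go to `n-1`, and with probability
`(A-n-1)ε/(A-1)` stay at `n`; state `0` is already done (`h 0 = 0`).  Then
the hitting time from `n` equals `n/(1-((A-1-n)/(A-1))·ε)` and is at most
`A-1`. -/
theorem stmt_11 (A : ℕ) (hA : 2 ≤ A) (ε : ℝ) (hε0 : 0 ≤ ε) (hε1 : ε < 1)
    (h : ℕ → ℝ) (h0 : h 0 = 0)
    (hrec : ∀ n : ℕ, 1 ≤ n → n ≤ A - 1 →
      h n = 1 + (ε / ((A : ℝ) - 1)) * 0
          + (1 - ε + ((n : ℝ) - 1) * ε / ((A : ℝ) - 1)) * h (n - 1)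
          + (((A : ℝ) - n - 1) * ε / ((A : ℝ) - 1)) * h n) :
    ∀ n : ℕ, n ≤ A - 1 →
      h n = (n : ℝ) / (1 - (((A : ℝ) - 1 - n) / ((A : ℝ) - 1)) * ε)
        ∧ h n ≤ (A : ℝ) - 1 := by
  have hA2 : (2:ℝ) ≤ (A:ℝ) := by exact_mod_cast hA
  have hc : (1:ℝ) ≤ (A:ℝ) - 1 := by linarith
  have hcpos : (0:ℝ) < (A:ℝ) - 1 := by linarith
  have hcne : ((A:ℝ) - 1) ≠ 0 := ne_of_gt hcpos
  -- positivity of denominators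
  have hD : ∀ m : ℕ, (m:ℝ) ≤ (A:ℝ) - 1 →
      0 < 1 - (((A : ℝ) - 1 - m) / ((A : ℝ) - 1)) * ε := by
    intro m hm
    have h1 : (0:ℝ) ≤ ((A:ℝ) - 1 - m) / ((A:ℝ) - 1) := by
      apply div_nonneg (by linarith) (le_of_lt hcpos)
    have h2 : ((A:ℝ) - 1 - m) / ((A:ℝ) - 1) ≤ 1 := by
      rw [div_le_one hcpos]
      have : (0:ℝ) ≤ (m:ℝ) := Nat.cast_nonneg m
      linarith
    nlinarith
  intro n hn
  induction n with
  | zero =>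
      constructor
      · simp [h0]
      · rw [h0]; linarith
  | succ k ih =>
      have hk : k ≤ A - 1 := Nat.le_of_succ_le hn
      obtain ⟨ihk, _⟩ := ih hk
      have hk2 : k + 2 ≤ A := by omega
      have hkc : (k:ℝ) + 2 ≤ (A:ℝ) := by exact_mod_cast hk2
      have hkc1 : (k:ℝ) + 1 ≤ (A:ℝ) - 1 := by linarith
      have hkc0 : (k:ℝ) ≤ (A:ℝ) - 1 := by linarith
      have hDk := hD k hkc0
      have hDk1 : 0 < 1 - (((A : ℝ) - 1 - ((k:ℕ)+1:ℕ)) / ((A : ℝ) - 1)) * ε := by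
        have := hD (k+1) (by push_cast; linarith)
        convert this using 3
      have heq := hrec (k+1) (by omega) hn
      simp only [Nat.add_sub_cancel] at heq
      rw [ihk] at heq
      push_cast at heq ⊢
      have hDk1' : 0 < 1 - (((A : ℝ) - 1 - ((k:ℝ)+1)) / ((A : ℝ) - 1)) * ε := by
        push_cast at hDk1; linarith
      have hDkne : (1 - (((A : ℝ) - 1 - (k:ℝ)) / ((A : ℝ) - 1)) * ε) ≠ 0 := ne_of_gt hDk
      have hp : (1 - ε + ((k:ℝ)+1-1) * ε / ((A : ℝ) - 1))
          = 1 - (((A : ℝ) - 1 - (k:ℝ)) / ((A : ℝ) - 1)) * ε := by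
        field_simp
        ring
      have hmul : (1 - (((A : ℝ) - 1 - (k:ℝ)) / ((A : ℝ) - 1)) * ε)
          * ((k:ℝ) / (1 - (((A : ℝ) - 1 - (k:ℝ)) / ((A : ℝ) - 1)) * ε)) = (k:ℝ) :=
        mul_div_cancel₀ _ hDkne
      rw [hp, hmul] at heq
      have hkey : h (k+1) = ((k:ℝ)+1) / (1 - (((A : ℝ) - 1 - ((k:ℝ)+1)) / ((A : ℝ) - 1)) * ε) := by
        rw [eq_div_iff (ne_of_gt hDk1')]
        field_simp at heq ⊢
        nlinarith [heq]
      refine ⟨hkey, ?_⟩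
      rw [hkey, div_le_iff₀ hDk1']
      have hkpos : (0:ℝ) ≤ (k:ℝ) := Nat.cast_nonneg k
      have hdm : ((A:ℝ) - 1 - ((k:ℝ)+1)) / ((A:ℝ) - 1) * ((A:ℝ) - 1)
          = (A:ℝ) - 1 - ((k:ℝ)+1) := div_mul_cancel₀ _ hcne
      nlinarith [mul_nonneg (sub_nonneg.mpr hkc1) (by linarith : (0:ℝ) ≤ 1 - ε)]
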